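/- Assume that for each T > 0 and t ≥ T the map (ξ₁,ξ₂) ↦ l(t−T,t,ξ₁,ξ₂,u) is twice continuously differentiable. If u is weakly persistent at x₀ and all the associated K-functions κ_t can be chosen with finite sensitivity, then there exists T > 0 such that for every t ≥ T there exists R_t > 0 with d²_{ξ₂}l(t−T,t,ξ₁,ξ₂,u) positive definite for all (ξ₁,ξ₂) ∈ B̄(x(t−T),R_t)². -/

import Mathlib

open MeasureTheory Metric Set Filter

/-- State space `ℝ^n` with the Euclidean norm. -/
abbrev Vec (n : ℕ) := EuclideanSpace ℝ (Fin n)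

/-- Cumulative output error
`l(t₁,t₂,ξ₁,ξ₂,u) = ∫_{t₁}^{t₂} ‖h(φ(s;t₁,ξ₁,u),u(s)) − h(φ(s;t₁,ξ₂,u),u(s))‖² ds`. -/
noncomputable def cumError {nx nu ny : ℕ}
    (h : Vec nx → Vec nu → Vec ny) (φ : ℝ → ℝ → Vec nx → Vec nx)
    (u : ℝ → Vec nu) (t₁ t₂ : ℝ) (ξ₁ ξ₂ : Vec nx) : ℝ :=
  ∫ s in t₁..t₂, ‖h (φ s t₁ ξ₁) (u s) - h (φ s t₁ ξ₂) (u s)‖ ^ 2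

/-- A `𝒦`-function: continuous, strictly increasing on `[0,∞)`, vanishing at `0`. -/
def IsKFunction (κ : ℝ → ℝ) : Prop :=
  ContinuousOn κ (Set.Ici 0) ∧ StrictMonoOn κ (Set.Ici 0) ∧ κ 0 = 0

/-- A `𝒦`-function with finite sensitivity: `inf{κ(s)/s² : 0 < s ≤ r} > 0` for some `r > 0`. -/
def FiniteSensitivity (κ : ℝ → ℝ) : Prop :=
  ∃ r > (0 : ℝ), ∃ c > (0 : ℝ), ∀ s : ℝ, 0 < s → s ≤ r → c ≤ κ s / s ^ 2

/-- Weakly persistent input trajectory at `x₀` with all associated `𝒦`-functions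
of finite sensitivity. -/
def WeaklyPersistentAtFS {nx nu ny : ℕ}
    (h : Vec nx → Vec nu → Vec ny) (φ : ℝ → ℝ → Vec nx → Vec nx)
    (u : ℝ → Vec nu) (x₀ : Vec nx) : Prop :=
  ∃ T > (0 : ℝ), ∀ t ≥ T, ∃ R > (0 : ℝ), ∃ κ : ℝ → ℝ,
    IsKFunction κ ∧ FiniteSensitivity κ ∧
    ∀ ξ₁ ∈ Metric.closedBall (φ (t - T) 0 x₀) R,
      ∀ ξ₂ ∈ Metric.closedBall (φ (t - T) 0 x₀) R,
        κ ‖ξ₁ - ξ₂‖ ≤ cumError h φ u (t - T) t ξ₁ ξ₂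

/-- Second Fréchet derivative of `ξ ↦ l(t₁,t₂,ξ₁,ξ,u)` at `ξ₂`, as a bilinear form. -/
noncomputable def d2l {nx nu ny : ℕ}
    (h : Vec nx → Vec nu → Vec ny) (φ : ℝ → ℝ → Vec nx → Vec nx)
    (u : ℝ → Vec nu) (t₁ t₂ : ℝ) (ξ₁ ξ₂ v w : Vec nx) : ℝ :=
  iteratedFDeriv ℝ 2 (fun ξ => cumError h φ u t₁ t₂ ξ₁ ξ) ξ₂ ![v, w]

/-!
Write `z = x(t - T)`. Finite sensitivity turns weak persistence into quadratic growth
`l(z, ξ) ≥ c ‖ξ - z‖²` near `z`, while `l(z, z) = 0`. A second-order Taylor expansion along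
`s ↦ (z, z + s v)` then bounds the partial Hessian at `(z, z)` below by `2 c ‖v‖²`, and since the
Hessian of a `C²` function is continuous, this coercivity survives on a ball around `(z, z)`.
-/

open Topology

section

variable {E F : Type*} [NormedAddCommGroup E] [NormedSpace ℝ E]
  [NormedAddCommGroup F] [NormedSpace ℝ F]

theorem two_mul_le_of_quadratic_growth {g : E → ℝ} {g' : E → E →L[ℝ] ℝ}
    {g'' : E →L[ℝ] E →L[ℝ] ℝ} {x w : E} {c : ℝ} (hc : 0 ≤ c)
    (hg : ∀ y, HasFDerivAt g (g' y) y) (hg' : HasFDerivAt g' g'' x)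
    (hgrowth : ∀ᶠ s in 𝓝 (0 : ℝ), g x + c * s ^ 2 ≤ g (x + s • w)) :
    2 * c ≤ g'' w w := by
  have hline : HasDerivAt (fun s : ℝ => g (x + s • w)) (g' x w) 0 := by
    have hpath : HasDerivAt (fun s : ℝ => x + s • w) w 0 := by
      simpa using ((hasDerivAt_id (0 : ℝ)).smul_const w).const_add x
    exact (hg x).comp_hasDerivAt_of_eq 0 hpath (by simp)
  have hcrit : g' x w = 0 := by
    refine IsLocalMin.hasDerivAt_eq_zero ?_ hline
    filter_upwards [hgrowth] with s hs
    simp only [zero_smul, add_zero]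
    nlinarith [mul_nonneg hc (sq_nonneg s)]
  -- with `v = 0` this is `g (x + s • w) = g x + s * g' x w + s ^ 2 / 2 * g'' w w + o(s ^ 2)`
  have htaylor := convex_univ.taylor_approx_two_segment (fun y _ => hg y) (mem_univ x)
    (by rw [interior_univ]; exact hg'.hasFDerivWithinAt) (v := 0) (w := w) (by simp) (by simp)
  simp only [smul_zero, add_zero, hcrit, smul_eq_mul, mul_zero, sub_zero, map_zero,
    zero_apply] at htaylor
  by_contra! hlt
  have hε : 0 < c - g'' w w / 2 := by linarith
  obtain ⟨s, hs, hsgrowth, hspos⟩ := ((htaylor.bound (half_pos hε)).and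
    ((hgrowth.filter_mono nhdsWithin_le_nhds).and self_mem_nhdsWithin)).exists
  rw [Real.norm_eq_abs, Real.norm_eq_abs, abs_of_nonneg (sq_nonneg s)] at hs
  have hs2 : 0 < s ^ 2 := by have : (0 : ℝ) < s := hspos; positivity
  nlinarith [le_abs_self (g (x + s • w) - g x - s ^ 2 / 2 * g'' w w)]

theorem apply_self_pos_of_norm_sub_lt {B B₀ : F →L[ℝ] F →L[ℝ] ℝ} {c : ℝ} (hB : ‖B - B₀‖ < c)
    {w : F} (hw : w ≠ 0) (hB₀ : c * ‖w‖ ^ 2 ≤ B₀ w w) : 0 < B w w := by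
  have hdiff : |B w w - B₀ w w| ≤ ‖B - B₀‖ * ‖w‖ * ‖w‖ := by
    simpa using (B - B₀).le_opNorm₂ w w
  have hw2 : 0 < ‖w‖ ^ 2 := by positivity
  nlinarith [neg_abs_le (B w w - B₀ w w)]

theorem iteratedFDeriv_two_comp_prodMk_right_apply {L : E × F → ℝ} (hL : ContDiff ℝ 2 L)
    (x : E) (y v w : F) :
    iteratedFDeriv ℝ 2 (fun y => L (x, y)) y ![v, w] =
      fderiv ℝ (fderiv ℝ L) (x, y) (0, v) (0, w) := by
  have hshift : (fun y => L (x, y)) =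
      (fun p => L ((x, 0) + p)) ∘ ContinuousLinearMap.inr ℝ E F := by
    ext y; simp
  have hL' : ContDiff ℝ 2 (fun p => L ((x, 0) + p)) := hL.comp (contDiff_const.add contDiff_id)
  rw [hshift, ContinuousLinearMap.iteratedFDeriv_comp_right _ hL' _ le_rfl,
    ContinuousMultilinearMap.compContinuousLinearMap_apply, iteratedFDeriv_comp_add_left,
    iteratedFDeriv_two_apply]
  simp

theorem eventually_forall_iteratedFDeriv_two_comp_prodMk_right_pos {L : E × F → ℝ}
    (hL : ContDiff ℝ 2 L) {x : E} {y : F} {c : ℝ} (hc : 0 < c)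
    (hgrowth : ∀ᶠ η in 𝓝 y, L (x, y) + c * ‖η - y‖ ^ 2 ≤ L (x, η)) :
    ∀ᶠ p in 𝓝 (x, y), ∀ v ≠ 0, 0 < iteratedFDeriv ℝ 2 (fun η => L (p.1, η)) p.2 ![v, v] := by
  have hL' : ContDiff ℝ 1 (fderiv ℝ L) := hL.fderiv_right (by norm_num)
  have hcoercive : ∀ v : F, 2 * (c * ‖v‖ ^ 2) ≤ fderiv ℝ (fderiv ℝ L) (x, y) (0, v) (0, v) := by
    intro v
    refine two_mul_le_of_quadratic_growth (by positivity)
      (fun p => (hL.differentiable (by norm_num) p).hasFDerivAt)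
      (hL'.differentiable one_ne_zero (x, y)).hasFDerivAt ?_
    have hline : Tendsto (fun s : ℝ => y + s • v) (𝓝 0) (𝓝 y) :=
      Continuous.tendsto' (by fun_prop) 0 y (by simp)
    filter_upwards [hline.eventually hgrowth] with s hs
    simpa [norm_smul, mul_pow, mul_comm, mul_left_comm] using hs
  have hnear : ∀ᶠ p in 𝓝 (x, y),
      ‖fderiv ℝ (fderiv ℝ L) p - fderiv ℝ (fderiv ℝ L) (x, y)‖ < c := by
    simpa [dist_eq_norm] using
      (hL'.continuous_fderiv one_ne_zero).continuousAt.eventually (ball_mem_nhds _ hc)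
  filter_upwards [hnear] with p hp v hv
  rw [iteratedFDeriv_two_comp_prodMk_right_apply hL]
  refine apply_self_pos_of_norm_sub_lt hp (by simpa using hv) ?_
  have hnorm : ‖((0 : E), v)‖ = ‖v‖ := by simp
  have hv2 : 0 ≤ c * ‖v‖ ^ 2 := by positivity
  rw [hnorm]
  linarith [hcoercive v]

end

theorem FiniteSensitivity.exists_mul_sq_le {κ : ℝ → ℝ} (hκ : FiniteSensitivity κ)
    (hκ₀ : κ 0 = 0) : ∃ r > (0 : ℝ), ∃ c > (0 : ℝ), ∀ s, 0 ≤ s → s ≤ r → c * s ^ 2 ≤ κ s := by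
  obtain ⟨r, hr, c, hc, hbound⟩ := hκ
  refine ⟨r, hr, c, hc, fun s hs hsr => ?_⟩
  rcases hs.eq_or_lt with rfl | hs
  · simp [hκ₀]
  · exact (le_div_iff₀ (by positivity)).1 (hbound s hs hsr)

theorem cumError_self {nx nu ny : ℕ} (h : Vec nx → Vec nu → Vec ny)
    (φ : ℝ → ℝ → Vec nx → Vec nx) (u : ℝ → Vec nu) (t₁ t₂ : ℝ) (ξ : Vec nx) :
    cumError h φ u t₁ t₂ ξ ξ = 0 := by
  simp [cumError]

theorem stmt5_general {nx nu ny : ℕ}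
    (h : Vec nx → Vec nu → Vec ny)
    (u : ℝ → Vec nu) (φ : ℝ → ℝ → Vec nx → Vec nx) (x₀ : Vec nx)
    (hC2 : ∀ T > (0 : ℝ), ∀ t ≥ T,
      ContDiff ℝ 2 (fun p : Vec nx × Vec nx => cumError h φ u (t - T) t p.1 p.2))
    (hwp : WeaklyPersistentAtFS h φ u x₀) :
    ∃ T > (0 : ℝ), ∀ t ≥ T, ∃ R > (0 : ℝ),
      ∀ ξ₁ ∈ Metric.closedBall (φ (t - T) 0 x₀) R,
        ∀ ξ₂ ∈ Metric.closedBall (φ (t - T) 0 x₀) R,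
          ∀ v : Vec nx, v ≠ 0 → 0 < d2l h φ u (t - T) t ξ₁ ξ₂ v v := by
  obtain ⟨T, hT, hpersistent⟩ := hwp
  refine ⟨T, hT, fun t ht => ?_⟩
  obtain ⟨R, hR, κ, ⟨-, -, hκ₀⟩, hsens, hbound⟩ := hpersistent t ht
  obtain ⟨r, hr, c, hc, hquad⟩ := hsens.exists_mul_sq_le hκ₀
  set z := φ (t - T) 0 x₀
  have hgrowth : ∀ᶠ ξ in 𝓝 z, cumError h φ u (t - T) t z z + c * ‖ξ - z‖ ^ 2 ≤
      cumError h φ u (t - T) t z ξ := by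
    filter_upwards [closedBall_mem_nhds z (lt_min hR hr)] with ξ hξ
    rw [mem_closedBall, dist_eq_norm, le_min_iff] at hξ
    rw [cumError_self, zero_add, norm_sub_rev]
    refine (hquad _ (norm_nonneg _) (norm_sub_rev ξ z ▸ hξ.2)).trans ?_
    exact hbound z (mem_closedBall_self hR.le) ξ (by rw [mem_closedBall, dist_eq_norm]; exact hξ.1)
  obtain ⟨R', hR', hpos⟩ := nhds_basis_closedBall.eventually_iff.1 <|
    eventually_forall_iteratedFDeriv_two_comp_prodMk_right_pos (hC2 T hT t ht) hc hgrowth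
  refine ⟨R', hR', fun ξ₁ hξ₁ ξ₂ hξ₂ v hv => ?_⟩
  have hmem : (ξ₁, ξ₂) ∈ closedBall (z, z) R' := by
    rw [← closedBall_prod_same]; exact ⟨hξ₁, hξ₂⟩
  have hhess := hpos hmem v hv
  beta_reduce at hhess
  exact hhess

/-- if `u` is weakly persistent at `x₀` with all associated
`𝒦`-functions of finite sensitivity, then the Hessian of the MHE cost is
positive definite on a neighbourhood of `x(t−T)`. -/
theorem stmt5 {nx nu ny : ℕ}
    (f : Vec nx → Vec nu → Vec nx) (h : Vec nx → Vec nu → Vec ny)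
    (u : ℝ → Vec nu) (φ : ℝ → ℝ → Vec nx → Vec nx) (x₀ : Vec nx)
    (hf : ContDiff ℝ 2 (Function.uncurry f))
    (hh : ContDiff ℝ 2 (Function.uncurry h))
    (hflow_init : ∀ s₁ : ℝ, 0 ≤ s₁ → ∀ ξ, φ s₁ s₁ ξ = ξ)
    (hflow_ode : ∀ s₁ s : ℝ, 0 ≤ s₁ → s₁ ≤ s → ∀ ξ,
      HasDerivAt (fun τ => φ τ s₁ ξ) (f (φ s s₁ ξ) (u s)) s)
    (hC2 : ∀ T > (0 : ℝ), ∀ t ≥ T,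
      ContDiff ℝ 2 (fun p : Vec nx × Vec nx => cumError h φ u (t - T) t p.1 p.2))
    (hwp : WeaklyPersistentAtFS h φ u x₀) :
    ∃ T > (0 : ℝ), ∀ t ≥ T, ∃ R > (0 : ℝ),
      ∀ ξ₁ ∈ Metric.closedBall (φ (t - T) 0 x₀) R,
        ∀ ξ₂ ∈ Metric.closedBall (φ (t - T) 0 x₀) R,
          ∀ v : Vec nx, v ≠ 0 → 0 < d2l h φ u (t - T) t ξ₁ ξ₂ v v :=
  stmt5_general h u φ x₀ hC2 hwp
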